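/- arXiv:2401.14138 — 2 statements merged into one kernel-verified Lean document; each statement's English description precedes it below -/
import Mathlib

section
/- Fix a positive integer m and let q be a prime with q > m, gcd(q,m) = 1, and mq ≡ 1 (mod 4). If the rational numbers X(m) and Y(m) both have q-adic valuation 0 (i.e., q divides neither the numerator nor denominator of X(m) or of Y(m)), then the discriminant of F_{mq}(x) is not the square of a rational number. -/
open Polynomial BigOperators

/-- `F n` is the truncated logarithmic polynomial `1 + x + x²/2 + ⋯ + xⁿ/n ∈ ℚ[x]`. -/
noncomputable def F (n : ℕ) : Polynomial ℚ :=
  1 + ∑ k ∈ Finset.Icc 1 n, Polynomial.C ((k : ℚ)⁻¹) * Polynomial.X ^ k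

/-- `Ln n = lcm {1, 2, …, n}`. -/
def Ln (n : ℕ) : ℕ := (Finset.Icc 1 n).lcm id

/-- `Ftilde n = Ln n • F n`, a polynomial with integer coefficients. -/
noncomputable def Ftilde (n : ℕ) : Polynomial ℚ := Polynomial.C ((Ln n : ℚ)) * F n

/-- The resultant `Res(P, Q)` of two polynomials over `ℚ`, computed in `ℂ` via the
product formula `Res(P,Q) = lc(P)^(deg Q) * ∏_{P(r)=0} Q(r)` (roots with multiplicity). -/
noncomputable def resC (P Q : Polynomial ℚ) : ℂ :=
  ((P.leadingCoeff : ℂ)) ^ Q.natDegree *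
    ((P.map (algebraMap ℚ ℂ)).roots.map (fun r => (Q.map (algebraMap ℚ ℂ)).eval r)).prod

/-- The discriminant `disc P = (−1)^(n(n−1)/2) ⬝ a_n⁻¹ ⬝ Res(P, P′)`, as a complex number. -/
noncomputable def discC (P : Polynomial ℚ) : ℂ :=
  (-1) ^ (P.natDegree.choose 2) * ((P.leadingCoeff : ℂ))⁻¹ * resC P (Polynomial.derivative P)

/-- `𝒫 n = ∏_θ F̃_n(θ)`, the product over the nontrivial `n`-th roots of unity in `ℂ`. -/
noncomputable def P (n : ℕ) : ℂ :=
  ∏ θ ∈ (Polynomial.nthRootsFinset n (1 : ℂ)).erase 1, (Polynomial.aeval θ) (Ftilde n)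

/-- `Xc m ω = ∏_{k=1}^{m−1} (1/m + ω^k + ω^{2k}/2 + ⋯ + ω^{(m−1)k}/(m−1))`. -/
noncomputable def Xc (m : ℕ) (ω : ℂ) : ℂ :=
  ∏ k ∈ Finset.Icc 1 (m - 1), ((m : ℂ)⁻¹ + ∑ j ∈ Finset.Icc 1 (m - 1), ω ^ (j * k) / (j : ℂ))

/-- `Y m = 1 + 1/2 + ⋯ + 1/m ∈ ℚ`. -/
def Y (m : ℕ) : ℚ := ∑ j ∈ Finset.Icc 1 m, (j : ℚ)⁻¹

/-!
Write `n = m q`. The derivative of `F n` is `1 + x + ⋯ + x^(n-1)`, whose roots are the nontrivial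
`n`-th roots of unity `θ`, so `disc F_n = n ∏_θ F_n(θ)`, the sign being `+` since `n ≡ 1 (mod 4)`.
As `q² > n`, `L = lcm(1, …, n) = q c` with `q ∤ c`, and modulo `q` (in the algebraic integers) only
the monomials `x^(q j)` of `L F_n` survive: `L F_n(θ) ≡ c (F_m(θ^q) - 1)`. When `θ` runs over the
nontrivial `n`-th roots of unity, `θ^q` runs `q` times over the `m`-th roots of unity, except
that `1` is hit only `q - 1` times, so the product of the right-hand sides is
`c^(n-1) Y(m)^(q-1) X(m)^q`, a `q`-adic unit. Hence if `disc F_n = r²`, the rational number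
`L^(n-1) r² / n` is a `q`-adic unit; but its `q`-adic valuation `(n - 1) + 2 v_q(r) - 1` is odd.
-/

lemma Multiset.range_eq_zero_cons_Ico {n : ℕ} (hn : 0 < n) :
    Multiset.range n = 0 ::ₘ (Finset.Ico 1 n).val := by
  rw [← Finset.insert_val_of_notMem (by simp), ← Finset.range_val]
  congr 1
  ext i
  simp only [Finset.mem_range, Finset.mem_insert, Finset.mem_Ico]
  omega

namespace Polynomial

variable {K : Type*} [Field K]

-- The product form of `Res(f, g) = (-1) ^ (deg f * deg g) * Res(g, f)`.
lemma leadingCoeff_pow_mul_prod_roots_eval {f g : K[X]} (hf : f.Splits) (hg : g.Monic)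
    (hg' : g.Splits) :
    f.leadingCoeff ^ g.natDegree * (f.roots.map g.eval).prod =
      (-1) ^ (f.natDegree * g.natDegree) * (g.roots.map f.eval).prod := by
  have hfe : g.roots.map f.eval =
      g.roots.map fun t => f.leadingCoeff * (f.roots.map (t - ·)).prod :=
    Multiset.map_congr rfl fun t _ => hf.eval_eq_prod_roots t
  have hsub := map_sub_roots_sprod_eq_prod_map_eval f.roots g hg hg'
  rw [Multiset.prod_map_product_eq_prod_prod g.roots f.roots (fun ij => ij.1 - ij.2)] at hsub
  rw [hfe, Multiset.prod_map_mul, Multiset.map_const', Multiset.prod_replicate, hsub,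
    ← hf.natDegree_eq_card_roots, ← hg'.natDegree_eq_card_roots, mul_left_comm,
    ← mul_assoc ((-1 : K) ^ _), ← pow_add, ← two_mul, pow_mul, neg_one_sq, one_pow, one_mul]

lemma roots_geom_sum {R : Type*} [CommRing R] [IsDomain R] {ψ : R} {n : ℕ}
    (hψ : IsPrimitiveRoot ψ n) (hn : 0 < n) :
    (∑ i ∈ Finset.range n, X ^ i : R[X]).roots = (Finset.Ico 1 n).val.map (ψ ^ ·) := by
  have hprod : (∑ i ∈ Finset.range n, X ^ i : R[X]) * (X - C 1) = X ^ n - C 1 := by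
    rw [C_1, geom_sum_mul]
  have hne : X ^ n - C (1 : R) ≠ 0 := (monic_X_pow_sub_C 1 hn.ne').ne_zero
  have hroots := congrArg roots hprod
  rw [roots_mul (hprod ▸ hne), roots_X_sub_C, ← nthRoots, hψ.nthRoots_eq (one_pow n),
    Multiset.range_eq_zero_cons_Ico hn, Multiset.map_cons, pow_zero, mul_one,
    Multiset.add_comm, Multiset.singleton_add] at hroots
  simpa only [mul_one] using (Multiset.cons_inj_right 1).mp hroots

end Polynomial

lemma prod_range_mul_eq_pow {R M : Type*} [Monoid R] [CommMonoid M] {ω : R} {m : ℕ}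
    (hω : ω ^ m = 1) (f : R → M) (q : ℕ) :
    ∏ i ∈ Finset.range (m * q), f (ω ^ i) = (∏ i ∈ Finset.range m, f (ω ^ i)) ^ q := by
  induction q with
  | zero => simp
  | succ q ih =>
    rw [Nat.mul_succ, Finset.prod_range_add, ih, pow_succ]
    simp only [pow_add, pow_mul, hω, one_pow, one_mul]

lemma prod_Ico_one_mul_eq_pow {R M : Type*} [Monoid R] [CommMonoidWithZero M]
    [IsCancelMulZero M] {ω : R} {m q : ℕ}
    (hω : ω ^ m = 1) (hm : 0 < m) (hq : 0 < q) {f : R → M} (hf : f 1 ≠ 0) :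
    ∏ i ∈ Finset.Ico 1 (m * q), f (ω ^ i) =
      f 1 ^ (q - 1) * (∏ i ∈ Finset.Ico 1 m, f (ω ^ i)) ^ q := by
  obtain ⟨q, rfl⟩ : ∃ q', q = q' + 1 := ⟨q - 1, by omega⟩
  have h := prod_range_mul_eq_pow hω f (q + 1)
  rw [Finset.prod_range_eq_mul_Ico _ (by positivity), Finset.prod_range_eq_mul_Ico _ hm, pow_zero,
    mul_pow, pow_succ', mul_assoc] at h
  rw [Nat.add_sub_cancel]
  exact mul_left_cancel₀ hf h

lemma IsPrimitiveRoot.prod_Ico_pow_eq {R M : Type*} [CommRing R] [IsDomain R] [CommMonoid M]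
    {ω ω' : R} {m : ℕ} (hω : IsPrimitiveRoot ω m) (hω' : IsPrimitiveRoot ω' m) (hm : 0 < m)
    (f : R → M) : ∏ i ∈ Finset.Ico 1 m, f (ω ^ i) = ∏ i ∈ Finset.Ico 1 m, f (ω' ^ i) := by
  have h := congrArg (fun s => (s.map f).prod)
    ((roots_geom_sum hω hm).symm.trans (roots_geom_sum hω' hm))
  simpa only [Multiset.map_map, Finset.prod_map_val, Function.comp_apply] using h

lemma derivative_F (n : ℕ) : derivative (F n) = ∑ i ∈ Finset.range n, X ^ i := by
  have hterm : ∀ k ∈ Finset.Icc 1 n,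
      derivative (C ((k : ℚ)⁻¹) * X ^ k) = X ^ (k - 1) := fun k hk => by
    have hk : (k : ℚ) ≠ 0 := by have := (Finset.mem_Icc.mp hk).1; positivity
    rw [derivative_C_mul_X_pow, inv_mul_cancel₀ hk, C_1, one_mul]
  rw [F, derivative_add, derivative_one, zero_add, derivative_sum, Finset.sum_congr rfl hterm,
    ← Finset.Ico_add_one_right_eq_Icc, Finset.sum_Ico_eq_sum_range]
  simp

lemma coeff_F_self {n : ℕ} (hn : 0 < n) : (F n).coeff n = (n : ℚ)⁻¹ := by
  simp [F, coeff_one, hn.ne', coeff_X_pow]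

lemma natDegree_F {n : ℕ} (hn : 0 < n) : (F n).natDegree = n := by
  refine natDegree_eq_of_le_of_coeff_ne_zero ?_ (by rw [coeff_F_self hn]; positivity)
  refine natDegree_add_le_of_degree_le (by simp) (natDegree_sum_le_of_forall_le _ _ fun k hk => ?_)
  exact (natDegree_C_mul_X_pow_le _ _).trans (Finset.mem_Icc.mp hk).2

lemma leadingCoeff_F {n : ℕ} (hn : 0 < n) : (F n).leadingCoeff = (n : ℚ)⁻¹ := by
  rw [leadingCoeff, natDegree_F hn, coeff_F_self hn]

lemma aeval_F {K : Type*} [Field K] [CharZero K] (n : ℕ) (θ : K) :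
    aeval θ (F n) = 1 + ∑ k ∈ Finset.Icc 1 n, θ ^ k / k := by
  simp [F, div_eq_inv_mul]

lemma resC_eq_prod_roots (P : ℚ[X]) {Q : ℚ[X]} (hQ : Q.Monic) :
    resC P Q = (-1) ^ (P.natDegree * Q.natDegree) *
      ((Q.map (algebraMap ℚ ℂ)).roots.map fun t => aeval t P).prod := by
  have h := leadingCoeff_pow_mul_prod_roots_eval (IsAlgClosed.splits (P.map (algebraMap ℚ ℂ)))
    (hQ.map (algebraMap ℚ ℂ)) (IsAlgClosed.splits _)
  simp only [leadingCoeff_map, natDegree_map, eval_map_algebraMap, eq_ratCast] at h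
  simpa only [resC, eval_map_algebraMap] using h

lemma discC_F {n : ℕ} (hn : 0 < n) {ψ : ℂ} (hψ : IsPrimitiveRoot ψ n) :
    discC (F n) = (-1) ^ n.choose 2 * n * ∏ i ∈ Finset.Ico 1 n, aeval (ψ ^ i) (F n) := by
  have hD : (derivative (F n)).Monic := derivative_F n ▸ monic_geom_sum_X hn.ne'
  have hDC : (derivative (F n)).map (algebraMap ℚ ℂ) = ∑ i ∈ Finset.range n, X ^ i := by
    simp [derivative_F, Polynomial.map_sum]
  rw [discC, resC_eq_prod_roots _ hD, hDC, roots_geom_sum hψ hn, Multiset.map_map,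
    Function.comp_def, Finset.prod_map_val, natDegree_derivative, natDegree_F hn,
    (Nat.even_mul_pred_self n).neg_one_pow, leadingCoeff_F hn]
  push_cast
  rw [inv_inv, one_mul]

lemma Xc_eq_prod {m : ℕ} (hm : 0 < m) {ω : ℂ} (hω : ω ^ m = 1) :
    Xc m ω = ∏ k ∈ Finset.Ico 1 m, (aeval (ω ^ k) (F m) - 1) := by
  obtain ⟨m, rfl⟩ : ∃ m', m = m' + 1 := ⟨m - 1, by omega⟩
  rw [Xc, Nat.add_sub_cancel, Finset.Ico_add_one_right_eq_Icc]
  refine Finset.prod_congr rfl fun k _ => ?_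
  rw [aeval_F, add_sub_cancel_left, Finset.sum_Icc_succ_top (by omega), ← pow_mul, mul_comm k,
    pow_mul, hω, one_pow, one_div, add_comm]
  simp only [← pow_mul, mul_comm k]

lemma aeval_one_F_sub_one (m : ℕ) : aeval (1 : ℂ) (F m) - 1 = Y m := by
  simp [aeval_F, Y]

lemma prod_Ico_aeval_F_sub_one {m q : ℕ} (hm : 0 < m) (hq : 0 < q) {ζ ω : ℂ}
    (hζ : IsPrimitiveRoot ζ m) (hω : IsPrimitiveRoot ω m) (hY : Y m ≠ 0) :
    ∏ i ∈ Finset.Ico 1 (m * q), (aeval (ζ ^ i) (F m) - 1) =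
      (Y m : ℂ) ^ (q - 1) * Xc m ω ^ q := by
  rw [prod_Ico_one_mul_eq_pow (f := fun z => aeval z (F m) - 1) hζ.pow_eq_one hm hq
      (by rw [aeval_one_F_sub_one]; exact_mod_cast hY),
    aeval_one_F_sub_one, Xc_eq_prod hm hω.pow_eq_one,
    hζ.prod_Ico_pow_eq hω hm fun z => aeval z (F m) - 1]

-- `Ln n` is `Nat.lcmUpto n` by definition.
lemma factorization_Ln_mul {m q : ℕ} (hq : q.Prime) (hm : 0 < m) (hqm : m < q) :
    (Ln (m * q)).factorization q = 1 :=
  (Nat.factorization_lcmUpto _ hq).trans <| Nat.log_eq_of_pow_le_of_lt_pow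
    (by simpa using Nat.le_mul_of_pos_left q hm)
    (by rw [sq]; exact Nat.mul_lt_mul_of_pos_right hqm hq.pos)

lemma exists_Ln_mul_eq {m q : ℕ} (hq : q.Prime) (hm : 0 < m) (hqm : m < q) :
    ∃ c, Ln (m * q) = q * c ∧ ¬ q ∣ c := by
  refine ⟨ordCompl[q] (Ln (m * q)), ?_, Nat.not_dvd_ordCompl hq (Nat.lcmUpto_ne_zero _)⟩
  conv_lhs => rw [← Nat.ordProj_mul_ordCompl_eq_self (Ln (m * q)) q]
  rw [factorization_Ln_mul hq hm hqm, pow_one]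

lemma Icc_filter_dvd_eq_image {m q : ℕ} (hq : 0 < q) :
    (Finset.Icc 1 (m * q)).filter (q ∣ ·) = (Finset.Icc 1 m).image (q * ·) := by
  ext k
  simp only [Finset.mem_filter, Finset.mem_Icc, Finset.mem_image]
  constructor
  · rintro ⟨⟨hk1, hkm⟩, j, rfl⟩
    refine ⟨j, ⟨Nat.pos_of_ne_zero ?_, ?_⟩, rfl⟩
    · rintro rfl; omega
    · exact Nat.le_of_mul_le_mul_left (by rwa [mul_comm m] at hkm) hq
  · rintro ⟨j, ⟨hj1, hjm⟩, rfl⟩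
    exact ⟨⟨Nat.mul_pos hq hj1, by rw [mul_comm m]; exact Nat.mul_le_mul_left q hjm⟩,
      dvd_mul_right q j⟩

lemma mul_aeval_F_mul_eq {K : Type*} [Field K] [CharZero K] (m : ℕ) {q : ℕ} (hq : 0 < q)
    (c : ℕ) (θ : K) :
    (q * c : K) * aeval θ (F (m * q)) = c * (aeval (θ ^ q) (F m) - 1) +
      q * (c + ∑ k ∈ (Finset.Icc 1 (m * q)).filter (¬ q ∣ ·), c / k * θ ^ k) := by
  have hmult : ∑ k ∈ (Finset.Icc 1 (m * q)).filter (q ∣ ·), (q * c : K) * (θ ^ k / k) =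
      c * ∑ j ∈ Finset.Icc 1 m, (θ ^ q) ^ j / j := by
    rw [Icc_filter_dvd_eq_image hq,
      Finset.sum_image fun _ _ _ _ h => Nat.eq_of_mul_eq_mul_left hq h, Finset.mul_sum]
    refine Finset.sum_congr rfl fun j hj => ?_
    have hj : (j : K) ≠ 0 := Nat.cast_ne_zero.mpr (by grind)
    have hq : (q : K) ≠ 0 := Nat.cast_ne_zero.mpr hq.ne'
    push_cast
    rw [← pow_mul]
    field_simp
  have hrest : ∑ k ∈ (Finset.Icc 1 (m * q)).filter (¬ q ∣ ·), (q * c : K) * (θ ^ k / k) =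
      q * ∑ k ∈ (Finset.Icc 1 (m * q)).filter (¬ q ∣ ·), c / k * θ ^ k := by
    rw [Finset.mul_sum]
    exact Finset.sum_congr rfl fun k _ => by ring
  rw [aeval_F, aeval_F, add_sub_cancel_left, mul_add, mul_one, Finset.mul_sum,
    ← Finset.sum_filter_add_sum_filter_not _ (q ∣ ·), hmult, hrest]
  ring

lemma exists_prod_add_mul_eq {R ι : Type*} [CommRing R] (S : Subring R) {a : R} (ha : a ∈ S)
    (s : Finset ι) {x y : ι → R} (hx : ∀ i ∈ s, x i ∈ S) (hy : ∀ i ∈ s, y i ∈ S) :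
    ∃ w ∈ S, ∏ i ∈ s, (x i + a * y i) = ∏ i ∈ s, x i + a * w := by
  classical
  induction s using Finset.induction_on with
  | empty => exact ⟨0, S.zero_mem, by simp⟩
  | insert j s hj ih =>
    obtain ⟨w, hw, h⟩ := ih (fun i hi => hx i (Finset.mem_insert_of_mem hi))
      (fun i hi => hy i (Finset.mem_insert_of_mem hi))
    have hxj := hx j (Finset.mem_insert_self j s)
    have hyj := hy j (Finset.mem_insert_self j s)
    have hxs : ∏ i ∈ s, x i ∈ S := S.prod_mem fun i hi => hx i (Finset.mem_insert_of_mem hi)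
    refine ⟨x j * w + y j * ∏ i ∈ s, x i + a * (y j * w), ?_, ?_⟩
    · exact S.add_mem (S.add_mem (S.mul_mem hxj hw) (S.mul_mem hyj hxs))
        (S.mul_mem ha (S.mul_mem hyj hw))
    · rw [Finset.prod_insert hj, Finset.prod_insert hj, h]
      ring

lemma exists_intCast_eq_of_mem_integralClosure {y : ℚ} (hy : (y : ℂ) ∈ integralClosure ℤ ℂ) :
    ∃ g : ℤ, (g : ℚ) = y :=
  IsIntegrallyClosed.isIntegral_iff.mp <| (isIntegral_algHom_iff (algebraMap ℚ ℂ).toIntAlgHom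
    (algebraMap ℚ ℂ).injective).mp hy

lemma natCast_div_mul_pow_mem_integralClosure {c k : ℕ} (hk : k ∣ c) {θ : ℂ}
    (hθ : θ ∈ integralClosure ℤ ℂ) (j : ℕ) : (c : ℂ) / k * θ ^ j ∈ integralClosure ℤ ℂ := by
  rw [← Nat.cast_div_charZero hk]
  exact Subalgebra.mul_mem _ (Subalgebra.natCast_mem _ _) (Subalgebra.pow_mem _ hθ _)

lemma mul_aeval_F_sub_one_mem_integralClosure {m c : ℕ} (hc : ∀ j ∈ Finset.Icc 1 m, j ∣ c)
    {ζ : ℂ} (hζ : ζ ∈ integralClosure ℤ ℂ) :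
    (c : ℂ) * (aeval ζ (F m) - 1) ∈ integralClosure ℤ ℂ := by
  rw [aeval_F, add_sub_cancel_left, Finset.mul_sum]
  refine Subalgebra.sum_mem _ fun j hj => ?_
  rw [mul_div_assoc', mul_div_right_comm]
  exact natCast_div_mul_pow_mem_integralClosure (hc j hj) hζ j

lemma dvd_of_dvd_Ln_mul {m q c k : ℕ} (hq : q.Prime) (hL : Ln (m * q) = q * c)
    (hk : k ∈ Finset.Icc 1 (m * q)) (hqk : ¬ q ∣ k) : k ∣ c :=
  ((hq.coprime_iff_not_dvd.mpr hqk).symm).dvd_of_dvd_mul_left (hL ▸ Finset.dvd_lcm hk)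

lemma dvd_of_le_of_Ln_mul {m q c j : ℕ} (hq : q.Prime) (hqm : m < q) (hL : Ln (m * q) = q * c)
    (hj : j ∈ Finset.Icc 1 m) : j ∣ c := by
  have hj := Finset.mem_Icc.mp hj
  refine dvd_of_dvd_Ln_mul hq hL
    (Finset.mem_Icc.mpr ⟨hj.1, hj.2.trans (Nat.le_mul_of_pos_right m hq.pos)⟩) fun h => ?_
  exact absurd (Nat.le_of_dvd hj.1 h) (by omega)

lemma exists_prod_Ln_mul_aeval_F_eq {ι : Type*} {m q c : ℕ} (hq : q.Prime) (hqm : m < q)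
    (hL : Ln (m * q) = q * c) (s : Finset ι) {θ : ι → ℂ}
    (hθ : ∀ i ∈ s, θ i ∈ integralClosure ℤ ℂ) :
    ∃ w ∈ integralClosure ℤ ℂ, ∏ i ∈ s, ((Ln (m * q) : ℂ) * aeval (θ i) (F (m * q))) =
      ∏ i ∈ s, (c * (aeval (θ i ^ q) (F m) - 1)) + q * w := by
  simp_rw [hL, Nat.cast_mul, mul_aeval_F_mul_eq m hq.pos]
  refine exists_prod_add_mul_eq (integralClosure ℤ ℂ).toSubring (Subalgebra.natCast_mem _ q) s
    (fun i hi => mul_aeval_F_sub_one_mem_integralClosure (fun j => dvd_of_le_of_Ln_mul hq hqm hL)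
      (Subalgebra.pow_mem _ (hθ i hi) q))
    (fun i hi => Subalgebra.add_mem _ (Subalgebra.natCast_mem _ c) <| Subalgebra.sum_mem _
      fun k hk => natCast_div_mul_pow_mem_integralClosure
        (dvd_of_dvd_Ln_mul hq hL (Finset.mem_filter.mp hk).1 (Finset.mem_filter.mp hk).2)
        (hθ i hi) k)

lemma exists_Ln_pow_mul_prod_eq {m q c : ℕ} (hm : 0 < m) (hq : q.Prime) (hqm : m < q)
    (hL : Ln (m * q) = q * c) {ψ ω : ℂ} (hψ : IsPrimitiveRoot ψ (m * q))
    (hω : IsPrimitiveRoot ω m) (hY : Y m ≠ 0) :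
    ∃ w ∈ integralClosure ℤ ℂ,
      (Ln (m * q) : ℂ) ^ (m * q - 1) * ∏ i ∈ Finset.Ico 1 (m * q), aeval (ψ ^ i) (F (m * q)) =
        c ^ (m * q - 1) * (Y m : ℂ) ^ (q - 1) * Xc m ω ^ q + q * w := by
  have hn : 0 < m * q := Nat.mul_pos hm hq.pos
  obtain ⟨w, hw, hprod⟩ := exists_prod_Ln_mul_aeval_F_eq hq hqm hL (Finset.Ico 1 (m * q))
    fun i _ => (hψ.isIntegral hn).pow i
  refine ⟨w, hw, ?_⟩
  have hcard : (Finset.Ico 1 (m * q)).card = m * q - 1 := Nat.card_Ico 1 (m * q)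
  simp only [fun i => pow_right_comm ψ i q] at hprod
  rw [Finset.prod_mul_distrib, Finset.prod_mul_distrib, Finset.prod_const, Finset.prod_const,
    hcard, prod_Ico_aeval_F_sub_one hm hq.pos (hψ.pow hn (mul_comm m q)) hω hY] at hprod
  rw [hprod, mul_assoc]

lemma even_choose_two_of_mod_four_eq_one {n : ℕ} (hn : n % 4 = 1) : Even (n.choose 2) := by
  obtain ⟨t, rfl⟩ : ∃ t, n = 4 * t + 1 := ⟨n / 4, by omega⟩
  rw [Nat.choose_two_right, Nat.add_sub_cancel,
    show (4 * t + 1) * (4 * t) = 2 * (2 * (t * (4 * t + 1))) by ring,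
    Nat.mul_div_cancel_left _ two_pos]
  exact even_two_mul _

lemma padicValRat_unit_mul {p : ℕ} [Fact p.Prime] {a b : ℚ} (ha : a ≠ 0 ∧ padicValRat p a = 0)
    (hb : b ≠ 0 ∧ padicValRat p b = 0) : a * b ≠ 0 ∧ padicValRat p (a * b) = 0 :=
  ⟨mul_ne_zero ha.1 hb.1, by rw [padicValRat.mul ha.1 hb.1, ha.2, hb.2, add_zero]⟩

lemma padicValRat_unit_pow {p : ℕ} [Fact p.Prime] {a : ℚ} (ha : a ≠ 0 ∧ padicValRat p a = 0)
    (k : ℕ) : a ^ k ≠ 0 ∧ padicValRat p (a ^ k) = 0 :=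
  ⟨pow_ne_zero k ha.1, by rw [padicValRat.pow, ha.2, mul_zero]⟩

lemma padicValRat_unit_add_prime_mul_intCast {p : ℕ} [hp : Fact p.Prime] {u : ℚ}
    (hu : u ≠ 0 ∧ padicValRat p u = 0) (g : ℤ) :
    u + p * g ≠ 0 ∧ padicValRat p (u + p * g) = 0 := by
  rcases eq_or_ne g 0 with rfl | hg
  · simpa using hu
  have hp0 : (p : ℚ) ≠ 0 := Nat.cast_ne_zero.mpr hp.out.ne_zero
  have hg0 : (g : ℚ) ≠ 0 := Int.cast_ne_zero.mpr hg
  have hlt : padicValRat p u < padicValRat p (p * g) := by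
    rw [padicValRat.mul hp0 hg0, padicValRat.self hp.out.one_lt, padicValRat.of_int, hu.2]
    omega
  have hne : u + p * g ≠ 0 := fun h => by
    rw [eq_neg_of_add_eq_zero_left h, padicValRat.neg] at hlt
    exact lt_irrefl _ hlt
  exact ⟨hne, (padicValRat.add_eq_of_lt hne hu.1 (mul_ne_zero hp0 hg0) hlt).trans hu.2⟩

lemma padicValRat_Ln_pow_mul_sq_div {m q : ℕ} [hq : Fact q.Prime] (hm : 0 < m) (hqm : m < q)
    {r : ℚ} (hr : r ≠ 0) :
    padicValRat q ((Ln (m * q) : ℚ) ^ (m * q - 1) * r ^ 2 / (m * q : ℕ)) =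
      (m * q - 1 : ℕ) + 2 * padicValRat q r - 1 := by
  have hL : (Ln (m * q) : ℚ) ≠ 0 := Nat.cast_ne_zero.mpr (Nat.lcmUpto_ne_zero _)
  have hvL : padicValRat q (Ln (m * q)) = 1 := by
    rw [padicValRat.of_nat, ← Nat.factorization_def _ hq.out, factorization_Ln_mul hq.out hm hqm,
      Nat.cast_one]
  have hvn : padicValRat q (m * q : ℕ) = 1 := by
    rw [padicValRat.of_nat, padicValNat.mul hm.ne' hq.out.ne_zero,
      padicValNat.eq_zero_of_not_dvd fun h => absurd (Nat.le_of_dvd hm h) (by omega),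
      padicValNat_self, zero_add, Nat.cast_one]
  have hn : ((m * q : ℕ) : ℚ) ≠ 0 := Nat.cast_ne_zero.mpr (Nat.mul_pos hm hq.out.pos).ne'
  rw [padicValRat.div (mul_ne_zero (pow_ne_zero _ hL) (pow_ne_zero _ hr)) hn,
    padicValRat.mul (pow_ne_zero _ hL) (pow_ne_zero _ hr), padicValRat.pow, padicValRat.pow, hvL,
    hvn]
  push_cast
  ring

lemma exists_Ln_pow_mul_sq_div_eq {m q c : ℕ} (hm : 0 < m) (hq : q.Prime) (hqm : m < q)
    (hmod : (m * q) % 4 = 1) (hL : Ln (m * q) = q * c) {ω : ℂ} (hω : IsPrimitiveRoot ω m)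
    (hY : Y m ≠ 0) {x r : ℚ} (hx : (x : ℂ) = Xc m ω) (hr : (r : ℂ) ^ 2 = discC (F (m * q))) :
    ∃ g : ℤ, (Ln (m * q) : ℚ) ^ (m * q - 1) * r ^ 2 / (m * q : ℕ) =
      c ^ (m * q - 1) * Y m ^ (q - 1) * x ^ q + q * g := by
  have hn : 0 < m * q := Nat.mul_pos hm hq.pos
  have hψ := Complex.isPrimitiveRoot_exp (m * q) hn.ne'
  obtain ⟨w, hw, hcong⟩ := exists_Ln_pow_mul_prod_eq hm hq hqm hL hψ hω hY
  rw [discC_F hn hψ, (even_choose_two_of_mod_four_eq_one hmod).neg_one_pow, one_mul] at hr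
  have hnC : ((m * q : ℕ) : ℂ) ≠ 0 := Nat.cast_ne_zero.mpr hn.ne'
  set a : ℚ := (Ln (m * q) : ℚ) ^ (m * q - 1) * r ^ 2 / (m * q : ℕ)
  set u : ℚ := c ^ (m * q - 1) * Y m ^ (q - 1) * x ^ q
  have hau : (a : ℂ) = u + q * w := by
    simp only [a, u, Rat.cast_div, Rat.cast_mul, Rat.cast_pow, Rat.cast_natCast]
    rw [hr, hx, mul_div_assoc, mul_div_cancel_left₀ _ hnC, hcong]
  have hw' : (((a - u) / q : ℚ) : ℂ) = w := by
    rw [Rat.cast_div, Rat.cast_sub, hau, Rat.cast_natCast, add_sub_cancel_left,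
      mul_div_cancel_left₀ _ (Nat.cast_ne_zero.mpr hq.ne_zero)]
  obtain ⟨g, hg⟩ := exists_intCast_eq_of_mem_integralClosure (hw' ▸ hw)
  refine ⟨g, ?_⟩
  rw [hg, mul_div_cancel₀ _ (Nat.cast_ne_zero.mpr hq.ne_zero), add_sub_cancel]

theorem stmt8_general (m q : ℕ) (hm : 0 < m) (hq : q.Prime) (hqm : m < q)
    (hmod : (m * q) % 4 = 1) (ω : ℂ) (hω : IsPrimitiveRoot ω m)
    (hX : ∃ x : ℚ, (x : ℂ) = Xc m ω ∧ x ≠ 0 ∧ padicValRat q x = 0)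
    (hY : Y m ≠ 0 ∧ padicValRat q (Y m) = 0) :
    ¬ ∃ r : ℚ, (r : ℂ) ^ 2 = discC (F (m * q)) := by
  rintro ⟨r, hr⟩
  obtain ⟨x, hx, hx0, hvx⟩ := hX
  have := Fact.mk hq
  obtain ⟨c, hL, hqc⟩ := exists_Ln_mul_eq hq hm hqm
  obtain ⟨g, hg⟩ := exists_Ln_pow_mul_sq_div_eq hm hq hqm hmod hL hω hY.1 hx hr
  have hc : (c : ℚ) ≠ 0 ∧ padicValRat q c = 0 :=
    ⟨Nat.cast_ne_zero.mpr fun h => hqc (h ▸ dvd_zero q),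
      by rw [padicValRat.of_nat, padicValNat.eq_zero_of_not_dvd hqc, Nat.cast_zero]⟩
  obtain ⟨ha0, hva⟩ := padicValRat_unit_add_prime_mul_intCast (padicValRat_unit_mul
    (padicValRat_unit_mul (padicValRat_unit_pow hc _) (padicValRat_unit_pow hY _))
    (padicValRat_unit_pow ⟨hx0, hvx⟩ q)) g
  rw [← hg] at ha0 hva
  have hr0 : r ≠ 0 := by
    rintro rfl
    simp at ha0
  rw [padicValRat_Ln_pow_mul_sq_div hm hqm hr0] at hva
  generalize m * q = n at hmod hva
  omega

/-- Fix `m ≥ 1` and a prime `q > m` with `gcd(q, m) = 1` and `m*q ≡ 1 (mod 4)`.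
If `X(m)` and `Y(m)` are rationals of `q`-adic valuation 0, then `disc(F (m*q))` is not a
rational square. -/
theorem stmt8 (m q : ℕ) (hm : 0 < m) (hq : q.Prime) (hqm : m < q) (hgcd : Nat.gcd q m = 1)
    (hmod : (m * q) % 4 = 1) (ω : ℂ) (hω : IsPrimitiveRoot ω m)
    (hX : ∃ x : ℚ, (x : ℂ) = Xc m ω ∧ x ≠ 0 ∧ padicValRat q x = 0)
    (hY : Y m ≠ 0 ∧ padicValRat q (Y m) = 0) :
    ¬ ∃ r : ℚ, (r : ℂ) ^ 2 = discC (F (m * q)) :=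
  stmt8_general m q hm hq hqm hmod ω hω hX hY
end

section
/- Let n ≥ 8 and let ℓ be a prime with n/2 < ℓ < n−2. Then the integer 𝒫_n = ∏_θ F̃_n(θ), with θ ranging over the nontrivial n-th roots of unity in ℂ, is not divisible by ℓ. -/
/-! 𝒫_n is the image in ℂ of the integer resultant of `1 + X + ⋯ + X^(n-1)` and the integer
polynomial `F̃_n`. Since `n < 2ℓ ≤ ℓ²`, the prime `ℓ` divides `L_n` exactly once and divides no
`k ≤ n` other than `ℓ`; hence `F̃_n ≡ (L_n/ℓ)·X^ℓ (mod ℓ)`, and reducing the resultant mod `ℓ`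
gives `±(L_n/ℓ)^(n-1)`, a unit of `ZMod ℓ`. -/

open Polynomial BigOperators

open Finset

section GeomSum

variable {R : Type*} [CommRing R]

lemma Polynomial.coeff_geomSum_X (n k : ℕ) :
    (∑ i ∈ range n, (X : R[X]) ^ i).coeff k = if k < n then 1 else 0 := by
  simp only [finsetSum_coeff, coeff_X_pow, sum_ite_eq, mem_range]

lemma Polynomial.map_geomSum_X {S : Type*} [CommRing S] (φ : R →+* S) (n : ℕ) :
    (∑ i ∈ range n, (X : R[X]) ^ i).map φ = ∑ i ∈ range n, X ^ i := by
  simp only [Polynomial.map_sum, Polynomial.map_pow, map_X]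

lemma Polynomial.natDegree_geomSum_X_le (n : ℕ) :
    (∑ i ∈ range n, (X : R[X]) ^ i).natDegree ≤ n - 1 :=
  natDegree_sum_le_of_forall_le _ _ fun i hi ↦
    (natDegree_X_pow_le i).trans (by have := mem_range.1 hi; omega)

lemma Polynomial.roots_geomSum_X {K : Type*} [Field K] [DecidableEq K] {ζ : K} {n : ℕ}
    (hζ : IsPrimitiveRoot ζ n) (hn : 0 < n) :
    (∑ i ∈ range n, (X : K[X]) ^ i).roots = ((nthRootsFinset n (1 : K)).erase 1).val := by
  have hmul : (∑ i ∈ range n, (X : K[X]) ^ i) * (X - C 1) = X ^ n - C 1 := by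
    rw [C_1, geom_sum_mul]
  have hroots : 1 ::ₘ (∑ i ∈ range n, (X : K[X]) ^ i).roots = nthRoots n (1 : K) := by
    rw [nthRoots, ← hmul, roots_mul (hmul ▸ X_pow_sub_C_ne_zero hn 1), roots_X_sub_C,
      add_comm, Multiset.singleton_add]
  rw [erase_val, nthRootsFinset_def, Multiset.toFinset_val,
    Multiset.dedup_eq_self.2 hζ.nthRoots_one_nodup, ← hroots, Multiset.erase_cons_head]

lemma Polynomial.resultant_geomSum_X_eq_prod {K : Type*} [Field K] [DecidableEq K] {ζ : K}
    {n : ℕ} (hζ : IsPrimitiveRoot ζ n) (hn : 0 < n) (f : K[X]) {d : ℕ} (hf : f.natDegree ≤ d) :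
    resultant (∑ i ∈ range n, X ^ i) f (n - 1) d =
      ∏ θ ∈ (nthRootsFinset n (1 : K)).erase 1, f.eval θ := by
  set g : K[X] := ∑ i ∈ range n, X ^ i
  have hlead : g.coeff (n - 1) = 1 := by
    rw [coeff_geomSum_X, if_pos (Nat.sub_lt hn one_pos)]
  have hdeg : g.natDegree = n - 1 :=
    natDegree_eq_of_le_of_coeff_ne_zero (natDegree_geomSum_X_le n) (hlead ▸ one_ne_zero)
  have hsplit : g.Splits := by
    rw [splits_iff_card_roots, roots_geomSum_X hζ hn, hdeg, card_val,
      card_erase_of_mem (one_mem_nthRootsFinset hn), hζ.card_nthRootsFinset]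
  rw [← hdeg, resultant_eq_prod_eval _ _ _ hf hsplit, leadingCoeff, hdeg, hlead, one_pow,
    one_mul, roots_geomSum_X hζ hn, prod_eq_multiset_prod]

end GeomSum

lemma Polynomial.map_C_natCast_mul_X_pow {R : Type*} [CommRing R] (a k : ℕ) :
    (C (a : ℤ) * X ^ k).map (Int.castRingHom R) = C (a : R) * X ^ k := by
  rw [Polynomial.map_mul, Polynomial.map_pow, map_C, map_X, eq_intCast, Int.cast_natCast]

lemma Polynomial.resultant_C_mul_X_pow_right {R : Type*} [CommRing R] (f : R[X]) (c : R)
    {m d k : ℕ} (hf : f.natDegree ≤ m) (hk : k ≤ d) :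
    resultant f (C c * X ^ k) m d =
      f.coeff m ^ (d - k) * (c ^ m * ((-1) ^ (m * k) * f.coeff 0 ^ k)) := by
  obtain ⟨j, rfl⟩ := Nat.exists_eq_add_of_le hk
  rw [resultant_add_right_deg _ _ _ _ _ (natDegree_C_mul_X_pow_le c k), resultant_C_mul_right,
    resultant_X_pow_right _ _ _ hf, Nat.add_sub_cancel_left]

noncomputable def FtildeInt (n : ℕ) : ℤ[X] :=
  C (Ln n : ℤ) + ∑ k ∈ Icc 1 n, C ((Ln n / k : ℕ) : ℤ) * X ^ k

lemma Ln_eq_lcmUpto (n : ℕ) : Ln n = Nat.lcmUpto n := rfl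

lemma dvd_Ln {n k : ℕ} (hk : k ∈ Icc 1 n) : k ∣ Ln n := dvd_lcm hk

lemma map_FtildeInt (n : ℕ) : (FtildeInt n).map (Int.castRingHom ℚ) = Ftilde n := by
  rw [FtildeInt, Ftilde, F, mul_add, mul_one, mul_sum, Polynomial.map_add, Polynomial.map_sum,
    map_C, eq_intCast, Int.cast_natCast]
  refine congrArg _ (sum_congr rfl fun k hk ↦ ?_)
  have hk0 : (k : ℚ) ≠ 0 := by have := (mem_Icc.1 hk).1; positivity
  rw [map_C_natCast_mul_X_pow, ← mul_assoc, ← C_mul, Nat.cast_div (dvd_Ln hk) hk0, div_eq_mul_inv]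

lemma aeval_Ftilde {A : Type*} [CommRing A] [Algebra ℚ A] (x : A) (n : ℕ) :
    aeval x (Ftilde n) = aeval x (FtildeInt n) := by
  rw [← map_FtildeInt, ← algebraMap_int_eq, aeval_map_algebraMap]

lemma natDegree_FtildeInt_le (n : ℕ) : (FtildeInt n).natDegree ≤ n :=
  natDegree_add_le_of_degree_le (by rw [natDegree_C]; exact Nat.zero_le n) <|
    natDegree_sum_le_of_forall_le _ _ fun k hk ↦
      (natDegree_C_mul_X_pow_le _ k).trans (mem_Icc.1 hk).2

lemma not_dvd_Ln_div_self {p n : ℕ} (hp : p.Prime) (hpn : p ≤ n) (hn : n < p * p) :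
    ¬ p ∣ Ln n / p := by
  rintro ⟨m, hm⟩
  have hsq : p ^ 2 ∣ Ln n :=
    ⟨m, by rw [← Nat.div_mul_cancel (dvd_Ln (mem_Icc.2 ⟨hp.one_le, hpn⟩)), hm]; ring⟩
  rw [Ln_eq_lcmUpto] at hsq
  have := (hp.pow_dvd_iff_le_factorization (Nat.lcmUpto_ne_zero n)).1 hsq
  rw [Nat.factorization_lcmUpto n hp, Nat.log_eq_one_iff'.2 ⟨hpn, hn⟩] at this
  omega

lemma dvd_Ln_div {p n k : ℕ} (hp : p.Prime) (hpn : p ≤ n) (hk : k ∈ Icc 1 n) (hpk : ¬ p ∣ k) :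
    p ∣ Ln n / k := by
  have hpL : p ∣ k * (Ln n / k) := by
    rw [Nat.mul_div_cancel' (dvd_Ln hk)]
    exact dvd_Ln (mem_Icc.2 ⟨hp.one_le, hpn⟩)
  exact (hp.coprime_iff_not_dvd.2 hpk).dvd_of_dvd_mul_left hpL

lemma map_FtildeInt_zmod {p n : ℕ} (hp : p.Prime) (hpn : p ≤ n) (hn : n < 2 * p) :
    (FtildeInt n).map (Int.castRingHom (ZMod p)) = C ((Ln n / p : ℕ) : ZMod p) * X ^ p := by
  have hp_mem : p ∈ Icc 1 n := mem_Icc.2 ⟨hp.one_le, hpn⟩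
  rw [FtildeInt, Polynomial.map_add, Polynomial.map_sum, map_C, eq_intCast, Int.cast_natCast,
    (ZMod.natCast_eq_zero_iff _ _).2 (dvd_Ln hp_mem), C_0, zero_add,
    sum_eq_single_of_mem p hp_mem, map_C_natCast_mul_X_pow]
  intro k hk hkp
  have hpk : ¬ p ∣ k := by
    rintro ⟨m, rfl⟩
    have := (mem_Icc.1 hk).2
    rcases m with _ | _ | m
    · simp at hk
    · simp at hkp
    · nlinarith
  rw [map_C_natCast_mul_X_pow, (ZMod.natCast_eq_zero_iff _ _).2 (dvd_Ln_div hp hpn hk hpk), C_0,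
    zero_mul]

theorem stmt15_general (n ℓ : ℕ) (hℓ : ℓ.Prime) (h1 : n < 2 * ℓ) (h2 : ℓ < n - 2) :
    ∃ z : ℤ, (z : ℂ) = P n ∧ ¬ ((ℓ : ℤ) ∣ z) := by
  have hℓn : ℓ ≤ n := by omega
  have hn : 0 < n := by have := hℓ.pos; omega
  refine ⟨resultant (∑ i ∈ range n, X ^ i) (FtildeInt n) (n - 1) n, ?_, ?_⟩
  · rw [← eq_intCast (Int.castRingHom ℂ), ← resultant_map_map, map_geomSum_X,
      resultant_geomSum_X_eq_prod (Complex.isPrimitiveRoot_exp n hn.ne') hn _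
        (natDegree_map_le.trans (natDegree_FtildeInt_le n)), P]
    exact prod_congr rfl fun θ _ ↦ by
      rw [aeval_Ftilde, ← algebraMap_int_eq, eval_map_algebraMap]
  · have := Fact.mk hℓ
    have hc : ((Ln n / ℓ : ℕ) : ZMod ℓ) ≠ 0 := by
      rw [Ne, ZMod.natCast_eq_zero_iff]
      exact not_dvd_Ln_div_self hℓ hℓn (by nlinarith [hℓ.two_le])
    rw [← ZMod.intCast_zmod_eq_zero_iff_dvd, ← eq_intCast (Int.castRingHom (ZMod ℓ)),
      ← resultant_map_map, map_FtildeInt_zmod hℓ hℓn h1, map_geomSum_X,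
      resultant_C_mul_X_pow_right _ _ (natDegree_geomSum_X_le n) hℓn, coeff_geomSum_X,
      coeff_geomSum_X, if_pos (Nat.sub_lt hn one_pos), if_pos hn, one_pow, one_pow, one_mul,
      mul_one]
    exact mul_ne_zero (pow_ne_zero _ hc) (pow_ne_zero _ (neg_ne_zero.2 one_ne_zero))

/-- For `n ≥ 8` and a prime `ℓ` with `n/2 < ℓ < n − 2`, the integer `𝒫 n` is
not divisible by `ℓ`. -/
theorem stmt15 (n ℓ : ℕ) (hn : 8 ≤ n) (hℓ : ℓ.Prime) (h1 : n < 2 * ℓ) (h2 : ℓ < n - 2) :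
    ∃ z : ℤ, (z : ℂ) = P n ∧ ¬ ((ℓ : ℤ) ∣ z) :=
  stmt15_general n ℓ hℓ h1 h2
end
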